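/- Let A be a real m×n matrix, b ∈ ℝ^m and η > 0, and assume there exists x₀ ∈ ℝ^n with ‖Ax₀ − b‖₂ < η. If the minimizer x# of ‖x‖₁ over {x ∈ ℝ^n : ‖Ax − b‖₂ ≤ η} exists and is unique, then there exists λ ≥ 0 such that the unconstrained LASSO functional x ↦ (1/2)‖x‖₁ + (λ/2)‖Ax − b‖₂² admits a minimizer that is rank(A)-sparse (namely x# itself). -/

import Mathlib

/-- ℓ¹ norm on ℝ^d. -/
noncomputable def l1 {d : ℕ} (y : Fin d → ℝ) : ℝ := ∑ j, |y j|

/-- Euclidean (ℓ²) norm on ℝ^d. -/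
noncomputable def l2 {d : ℕ} (y : Fin d → ℝ) : ℝ := Real.sqrt (∑ j, (y j) ^ 2)

/-!
If the columns of `A` on the support of `x#` were dependent, some `v ≠ 0` in `ker A` supported
there would give, for small `t > 0`, feasible points `x# ± t v` whose ℓ¹ norms add up to
`2 ‖x#‖₁`; both would be minimizers, contradicting uniqueness. So `|supp x#| ≤ rank A`.

For the multiplier, `‖·‖₁` and `g x = ‖A x - b‖₂² - η²` are convex and `g` has a Slater point.
A line separating `(0, ‖x#‖₁)` from the open convex set `{(u, v) | ∃ x, g x < u ∧ ‖x‖₁ < v}` has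
normal `(α, β)` with `α ≤ 0` and, thanks to the Slater point, `β < 0`; then `μ = α / β ≥ 0`
satisfies `‖x#‖₁ ≤ ‖x‖₁ + μ g x` for all `x`. Since `g x# ≤ 0`, `x#` minimizes `‖x‖₁ + μ g x`,
which is twice the LASSO functional with `λ = μ`, up to a constant.
-/

open Set Filter Topology Matrix

lemma le_of_forall_pos_add_mul_lt {a b c : ℝ} (h : ∀ t > 0, a + t * b < c) : a ≤ c := by
  have hlim : Tendsto (fun t : ℝ => a + t * b) (𝓝[>] 0) (𝓝 a) := by
    have : Continuous (fun t : ℝ => a + t * b) := by fun_prop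
    simpa using (this.tendsto 0).mono_left nhdsWithin_le_nhds
  exact le_of_tendsto hlim (eventually_nhdsWithin_of_forall fun t ht => (h t ht).le)

lemma nonpos_of_forall_pos_add_mul_lt {a b c : ℝ} (h : ∀ t > 0, a + t * b < c) : b ≤ 0 := by
  by_contra! hb
  have := h (|c - a| / b + 1) (by positivity)
  rw [add_mul, div_mul_cancel₀ _ hb.ne'] at this
  linarith [le_abs_self (c - a)]

lemma isOpen_setOf_exists_lt_lt {E : Type*} {f g : E → ℝ} :
    IsOpen {q : ℝ × ℝ | ∃ x, g x < q.1 ∧ f x < q.2} := by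
  have : {q : ℝ × ℝ | ∃ x, g x < q.1 ∧ f x < q.2} = ⋃ x, Ioi (g x) ×ˢ Ioi (f x) := by
    ext q; simp
  rw [this]
  exact isOpen_iUnion fun x => isOpen_Ioi.prod isOpen_Ioi

section Lagrange

variable {E : Type*} [AddCommGroup E] [Module ℝ E] {f g : E → ℝ}

lemma convex_setOf_exists_lt_lt (hf : ConvexOn ℝ univ f) (hg : ConvexOn ℝ univ g) :
    Convex ℝ {q : ℝ × ℝ | ∃ x, g x < q.1 ∧ f x < q.2} := by
  refine convex_iff_forall_pos.2 ?_
  rintro q ⟨x, hgx, hfx⟩ r ⟨y, hgy, hfy⟩ a c ha hc hac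
  refine ⟨a • x + c • y, ?_, ?_⟩
  · calc g (a • x + c • y) ≤ a * g x + c * g y := hg.2 trivial trivial ha.le hc.le hac
      _ < a * q.1 + c * r.1 := add_lt_add (by gcongr) (by gcongr)
      _ = _ := by simp
  · calc f (a • x + c • y) ≤ a * f x + c * f y := hf.2 trivial trivial ha.le hc.le hac
      _ < a * q.2 + c * r.2 := add_lt_add (by gcongr) (by gcongr)
      _ = _ := by simp

theorem ConvexOn.exists_lagrange_multiplier (hf : ConvexOn ℝ univ f) (hg : ConvexOn ℝ univ g)
    {x₀ : E} (hx₀ : g x₀ < 0) {p : ℝ} (hp : ∀ x, g x < 0 → p ≤ f x) :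
    ∃ μ ≥ 0, ∀ x, p ≤ f x + μ * g x := by
  obtain ⟨ℓ, hℓ⟩ := geometric_hahn_banach_open_point (convex_setOf_exists_lt_lt hf hg)
    isOpen_setOf_exists_lt_lt (x := ((0 : ℝ), p)) fun ⟨x, hgx, hfx⟩ => (hp x hgx).not_gt hfx
  have hℓ_apply : ∀ u v : ℝ, ℓ (u, v) = u * ℓ (1, 0) + v * ℓ (0, 1) := by
    intro u v
    rw [show ((u, v) : ℝ × ℝ) = u • (1, 0) + v • (0, 1) by simp, map_add, map_smul, map_smul,
      smul_eq_mul, smul_eq_mul]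
  set α := ℓ (1, 0)
  set β := ℓ (0, 1)
  have hsep : ∀ x, ∀ s > 0, ∀ t > 0, (g x + s) * α + (f x + t) * β < p * β := by
    intro x s hs t ht
    simpa [hℓ_apply] using hℓ (g x + s, f x + t) ⟨x, by linarith, by linarith⟩
  have hα : α ≤ 0 := nonpos_of_forall_pos_add_mul_lt (a := (g x₀ + 1) * α + (f x₀ + 1) * β)
    (c := p * β) fun t ht => by linarith [hsep x₀ (1 + t) (by positivity) 1 one_pos]
  -- at the Slater point the `α`-term can be made to vanish
  have hslater : ∀ t > 0, f x₀ * β + t * β < p * β := fun t ht => by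
    simpa [add_mul] using hsep x₀ (-g x₀) (by linarith) t ht
  have hβ : β < 0 := by
    refine (nonpos_of_forall_pos_add_mul_lt hslater).lt_of_ne fun hβ0 => ?_
    simpa [hβ0] using hslater 1 one_pos
  refine ⟨α / β, div_nonneg_of_nonpos hα hβ.le, fun x => ?_⟩
  have hx : g x * α + f x * β ≤ p * β := le_of_forall_pos_add_mul_lt (b := α + β)
    fun t ht => by linarith [hsep x t ht t ht]
  rw [← mul_le_mul_right_of_neg hβ, add_mul, div_mul_eq_mul_div, div_mul_cancel₀ _ hβ.ne]
  linarith

theorem ConvexOn.exists_multiplier_lagrangian_le (hf : ConvexOn ℝ univ f) (hg : ConvexOn ℝ univ g)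
    {x₀ : E} (hx₀ : g x₀ < 0) {x₁ : E} (hfeas : g x₁ ≤ 0) (hmin : ∀ x, g x ≤ 0 → f x₁ ≤ f x) :
    ∃ μ ≥ 0, ∀ x, f x₁ + μ * g x₁ ≤ f x + μ * g x := by
  obtain ⟨μ, hμ, hle⟩ := hf.exists_lagrange_multiplier hg hx₀ fun x hx => hmin x hx.le
  exact ⟨μ, hμ, fun x => by nlinarith [hle x]⟩

end Lagrange

lemma l2_nonneg {d : ℕ} (y : Fin d → ℝ) : 0 ≤ l2 y := Real.sqrt_nonneg _

lemma l1_eq_norm {d : ℕ} (y : Fin d → ℝ) : l1 y = ‖WithLp.toLp 1 y‖ := by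
  simp [l1, PiLp.norm_eq_of_L1]

lemma l2_eq_norm {d : ℕ} (y : Fin d → ℝ) : l2 y = ‖WithLp.toLp 2 y‖ := by
  simp [l2, EuclideanSpace.norm_eq]

lemma convexOn_l1 {d : ℕ} : ConvexOn ℝ univ (l1 : (Fin d → ℝ) → ℝ) := by
  have h := (convexOn_norm convex_univ).comp_linearMap
    (WithLp.linearEquiv 1 ℝ (Fin d → ℝ)).symm.toLinearMap
  simpa [Function.comp_def, ← l1_eq_norm] using h

lemma convexOn_l2_sq {d : ℕ} : ConvexOn ℝ univ (fun y : Fin d → ℝ => l2 y ^ 2) := by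
  have h := ((convexOn_norm convex_univ).pow (fun _ _ => norm_nonneg _) 2).comp_linearMap
    (WithLp.linearEquiv 2 ℝ (Fin d → ℝ)).symm.toLinearMap
  simpa [Function.comp_def, ← l2_eq_norm] using h

lemma convexOn_l2_mulVec_sub_sq {m n : ℕ} (A : Matrix (Fin m) (Fin n) ℝ) (b : Fin m → ℝ) :
    ConvexOn ℝ univ (fun x => l2 (A *ᵥ x - b) ^ 2) :=
  convexOn_l2_sq.comp_affineMap (A.mulVecLin.toAffineMap - AffineMap.const ℝ (Fin n → ℝ) b)

lemma abs_add_add_abs_sub_of_abs_le {a b : ℝ} (h : |b| ≤ |a|) : |a + b| + |a - b| = 2 * |a| := by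
  cases abs_cases a <;> cases abs_cases b <;> cases abs_cases (a + b) <;>
    cases abs_cases (a - b) <;> linarith

lemma exists_pos_forall_abs_mul_le {ι : Type*} [Finite ι] {x v : ι → ℝ}
    (hv : Function.support v ⊆ Function.support x) : ∃ t : ℝ, 0 < t ∧ ∀ j, |t * v j| ≤ |x j| := by
  have hj : ∀ j, ∀ᶠ t in 𝓝 (0 : ℝ), |t * v j| ≤ |x j| := by
    intro j
    by_cases hxj : x j = 0
    · have hvj : v j = 0 := Function.notMem_support.1 fun h => hv h hxj
      simp [hvj]
    · have hlim : Tendsto (fun t : ℝ => |t * v j|) (𝓝 0) (𝓝 0) := by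
        have : Continuous (fun t : ℝ => |t * v j|) := by fun_prop
        simpa using this.tendsto 0
      exact hlim.eventually (eventually_le_nhds (abs_pos.2 hxj))
  obtain ⟨t, hall, ht⟩ := ((eventually_all.2 hj).filter_mono nhdsWithin_le_nhds).and
    (self_mem_nhdsWithin (s := Ioi (0 : ℝ))) |>.exists
  exact ⟨t, ht, hall⟩

lemma exists_pos_l1_add_smul_add_l1_sub_smul {d : ℕ} {x v : Fin d → ℝ}
    (hv : Function.support v ⊆ Function.support x) :
    ∃ t : ℝ, 0 < t ∧ l1 (x + t • v) + l1 (x - t • v) = 2 * l1 x := by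
  obtain ⟨t, ht, hle⟩ := exists_pos_forall_abs_mul_le hv
  refine ⟨t, ht, ?_⟩
  simp only [l1, ← Finset.sum_add_distrib, Finset.mul_sum, Pi.add_apply, Pi.sub_apply,
    Pi.smul_apply, smul_eq_mul]
  exact Finset.sum_congr rfl fun j _ => abs_add_add_abs_sub_of_abs_le (hle j)

lemma Matrix.ncard_le_rank_of_forall_support_subset {ι m K : Type*} [Fintype ι] [Fintype m]
    [Field K] (A : Matrix m ι K) (s : Set ι)
    (h : ∀ v, Function.support v ⊆ s → A *ᵥ v = 0 → v = 0) : s.ncard ≤ A.rank := by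
  let L := A.mulVecLin ∘ₗ Function.ExtendByZero.linearMap K ((↑) : s → ι)
  have hL : Function.Injective L := by
    rw [← LinearMap.ker_eq_bot, LinearMap.ker_eq_bot']
    intro w hw
    have hext : Function.extend ((↑) : s → ι) w 0 = 0 := by
      refine h _ (fun j hj => ?_) hw
      by_contra hjs
      exact hj (Function.extend_apply' _ _ _ (by rintro ⟨a, rfl⟩; exact hjs a.2))
    funext a
    simpa [Subtype.val_injective.extend_apply] using congrFun hext a
  classical
  calc s.ncard = Module.finrank K (s → K) := by
        rw [Module.finrank_fintype_fun_eq_card, ← Nat.card_coe_set_eq, Nat.card_eq_fintype_card]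
    _ = Module.finrank K (LinearMap.range L) := (LinearMap.finrank_range_of_inj hL).symm
    _ ≤ A.rank := Submodule.finrank_mono (LinearMap.range_comp_le_range _ _)

theorem ncard_support_le_rank_of_unique_l1_min {m n : ℕ} (A : Matrix (Fin m) (Fin n) ℝ)
    {S : Set (Fin n → ℝ)} {x : Fin n → ℝ} (hS : ∀ v, A *ᵥ v = 0 → x + v ∈ S)
    (hmin : ∀ y ∈ S, l1 x ≤ l1 y) (huniq : ∀ y ∈ S, l1 y = l1 x → y = x) :
    (Function.support x).ncard ≤ A.rank := by
  refine A.ncard_le_rank_of_forall_support_subset _ fun v hv hAv => ?_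
  obtain ⟨t, ht, hsum⟩ := exists_pos_l1_add_smul_add_l1_sub_smul hv
  have hAtv : A *ᵥ (t • v) = 0 := by rw [mulVec_smul, hAv, smul_zero]
  have hplus := hS _ hAtv
  have hminus : x - t • v ∈ S := by
    simpa [sub_eq_add_neg] using hS _ (by rw [mulVec_neg, hAtv, neg_zero])
  have hx := huniq _ hplus (by linarith [hmin _ hplus, hmin _ hminus])
  simpa [ht.ne'] using hx

theorem stmt_3_general {m n : ℕ} (A : Matrix (Fin m) (Fin n) ℝ) (b : Fin m → ℝ)
    (η : ℝ)
    (slater : ∃ x₀ : Fin n → ℝ, l2 (A.mulVec x₀ - b) < η)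
    (xsharp : Fin n → ℝ)
    (hfeas : l2 (A.mulVec xsharp - b) ≤ η)
    (hmin : ∀ x : Fin n → ℝ, l2 (A.mulVec x - b) ≤ η → l1 xsharp ≤ l1 x)
    (huniq : ∀ x : Fin n → ℝ, l2 (A.mulVec x - b) ≤ η → l1 x = l1 xsharp → x = xsharp) :
    ∃ lam : ℝ, 0 ≤ lam ∧
      {j : Fin n | xsharp j ≠ 0}.ncard ≤ A.rank ∧
      ∀ x : Fin n → ℝ,
        (1 / 2) * l1 xsharp + (lam / 2) * (l2 (A.mulVec xsharp - b)) ^ 2 ≤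
          (1 / 2) * l1 x + (lam / 2) * (l2 (A.mulVec x - b)) ^ 2 := by
  obtain ⟨x₀, hx₀⟩ := slater
  have hη : 0 ≤ η := (l2_nonneg _).trans hx₀.le
  set g : (Fin n → ℝ) → ℝ := fun x => l2 (A *ᵥ x - b) ^ 2 - η ^ 2
  have hg : ConvexOn ℝ univ g :=
    ((convexOn_l2_mulVec_sub_sq A b).add_const (-η ^ 2)).congr fun x _ => (sub_eq_add_neg _ _).symm
  have hg_nonpos : ∀ x, g x ≤ 0 ↔ l2 (A *ᵥ x - b) ≤ η := fun x => by
    rw [sub_nonpos, pow_le_pow_iff_left₀ (l2_nonneg _) hη two_ne_zero]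
  obtain ⟨μ, hμ, hle⟩ := convexOn_l1.exists_multiplier_lagrangian_le hg
    (x₀ := x₀) (by simpa [g] using pow_lt_pow_left₀ hx₀ (l2_nonneg _) two_ne_zero)
    ((hg_nonpos _).2 hfeas) fun x hx => hmin x ((hg_nonpos x).1 hx)
  refine ⟨μ, hμ, ?_, fun x => by linarith [hle x]⟩
  exact ncard_support_le_rank_of_unique_l1_min A (S := {x | l2 (A *ᵥ x - b) ≤ η})
    (fun v hv => by simpa [mulVec_add, hv] using hfeas) hmin huniq

/-- Under the Slater condition, if the constrained LASSO has a unique minimizer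
`x#`, then for some `λ ≥ 0` the unconstrained LASSO functional admits a
`rank(A)`-sparse minimizer, namely `x#` itself. -/
theorem stmt_3 {m n : ℕ} (A : Matrix (Fin m) (Fin n) ℝ) (b : Fin m → ℝ)
    (η : ℝ) (hη : 0 < η)
    (slater : ∃ x₀ : Fin n → ℝ, l2 (A.mulVec x₀ - b) < η)
    (xsharp : Fin n → ℝ)
    (hfeas : l2 (A.mulVec xsharp - b) ≤ η)
    (hmin : ∀ x : Fin n → ℝ, l2 (A.mulVec x - b) ≤ η → l1 xsharp ≤ l1 x)
    (huniq : ∀ x : Fin n → ℝ, l2 (A.mulVec x - b) ≤ η → l1 x = l1 xsharp → x = xsharp) :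
    ∃ lam : ℝ, 0 ≤ lam ∧
      {j : Fin n | xsharp j ≠ 0}.ncard ≤ A.rank ∧
      ∀ x : Fin n → ℝ,
        (1 / 2) * l1 xsharp + (lam / 2) * (l2 (A.mulVec xsharp - b)) ^ 2 ≤
          (1 / 2) * l1 x + (lam / 2) * (l2 (A.mulVec x - b)) ^ 2 :=
  stmt_3_general A b η slater xsharp hfeas hmin huniq
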